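/- Let κ ∈ Γ_k (k ≥ 1) with κ_1 ≥ ⋯ ≥ κ_n, and assume the entries are semi-convex: κ_i ≥ -K for all i, with K ≥ 0. If moreover κ_i ≥ δ_i κ_1 for positive constants δ_1,…,δ_k and κ_k ≥ 2 C(n,k) K where C(n,k) bounds the number of terms, then σ_k(κ) ≥ c · κ_1^k for a positive constant c depending only on n, k, δ_2,…,δ_k. More precisely, σ_k(κ) ≥ κ_1⋯κ_k − C(n,k) K κ_1⋯κ_{k-1}. -/
import Mathlib

/-- The `k`-th elementary symmetric polynomial of `κ ∈ ℝⁿ`. -/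
noncomputable def esymm (n k : ℕ) (κ : Fin n → ℝ) : ℝ :=
  ∑ s ∈ Finset.powersetCard k Finset.univ, ∏ i ∈ s, κ i

/-- strict mono maps on naturals grow at least linearly (Fin version). -/
lemma aux_strictMono_le {m : ℕ} (f : Fin m → ℕ)
    (hf : ∀ a b : Fin m, a < b → f a < f b) :
    ∀ v, ∀ h : v < m, v ≤ f ⟨v, h⟩ := by
  intro v
  induction v with
  | zero => intro h; exact Nat.zero_le _
  | succ w ih =>
    intro h
    have hw : w < m := by omega
    have h1 := hf ⟨w, hw⟩ ⟨w + 1, h⟩ (by simp [Fin.lt_def])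
    have h2 := ih hw
    omega

/-- A product over the first `m` indices equals a product over `range m`. -/
lemma aux_prod_range {n : ℕ} (κ : Fin n → ℝ) (κ' : ℕ → ℝ)
    (hκ' : ∀ j, ∀ h : j < n, κ' j = κ ⟨j, h⟩) (m : ℕ) (hm : m ≤ n) :
    ∏ i ∈ Finset.univ.filter (fun i : Fin n => (i : ℕ) < m), κ i
      = ∏ j ∈ Finset.range m, κ' j := by
  refine Finset.prod_bij (fun (i : Fin n) _ => (i : ℕ)) ?_ ?_ ?_ ?_
  · intro a ha
    simp only [Finset.mem_filter] at ha
    exact Finset.mem_range.mpr ha.2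
  · intro a _ b _ h
    exact Fin.val_injective h
  · intro b hb
    have hb' : b < m := Finset.mem_range.mp hb
    exact ⟨⟨b, by omega⟩, by simp [hb'], rfl⟩
  · intro a ha
    exact (hκ' a a.2).symm

lemma aux_card_range {n m : ℕ} (hm : m ≤ n) :
    (Finset.univ.filter (fun i : Fin n => (i : ℕ) < m)).card = m := by
  refine Eq.trans ?_ (Finset.card_range m)
  refine Finset.card_bij (fun (i : Fin n) _ => (i : ℕ)) ?_ ?_ ?_
  · intro a ha
    simp only [Finset.mem_filter] at ha
    exact Finset.mem_range.mpr ha.2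
  · intro a _ b _ h
    exact Fin.val_injective h
  · intro b hb
    have hb' : b < m := Finset.mem_range.mp hb
    exact ⟨⟨b, by omega⟩, by simp [hb'], rfl⟩

/-- Rearrangement: a product over any `t` with nonnegative entries is at most the
product of the `t.card` largest entries. -/
lemma aux_rearrange {n : ℕ} (κ : Fin n → ℝ) (κ' : ℕ → ℝ)
    (hκ' : ∀ j, ∀ h : j < n, κ' j = κ ⟨j, h⟩)
    (hord : ∀ i j : Fin n, i ≤ j → κ j ≤ κ i)
    (t : Finset (Fin n)) (hpos : ∀ i ∈ t, 0 ≤ κ i) :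
    ∏ i ∈ t, κ i ≤ ∏ j ∈ Finset.range t.card, κ' j := by
  have htn : t.card ≤ n := by
    have := Finset.card_le_univ t
    simpa using this
  set e := t.orderEmbOfFin (rfl : t.card = t.card) with he
  have hmem : ∀ j : Fin t.card, e j ∈ t := fun j => Finset.orderEmbOfFin_mem t rfl j
  have hmono : ∀ a b : Fin t.card, a < b → ((e a : Fin n) : ℕ) < ((e b : Fin n) : ℕ) := by
    intro a b hab
    exact e.strictMono hab
  have hle : ∀ j : Fin t.card, (j : ℕ) ≤ ((e j : Fin n) : ℕ) := by
    intro j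
    have := aux_strictMono_le (fun j : Fin t.card => ((e j : Fin n) : ℕ)) hmono j j.2
    simpa using this
  have h1 : ∏ i ∈ t, κ i = ∏ j : Fin t.card, κ (e j) := by
    refine (Finset.prod_bij (fun (j : Fin t.card) _ => e j) ?_ ?_ ?_ ?_).symm
    · intro a _; exact hmem a
    · intro a _ b _ h; exact e.injective h
    · intro b hb
      have : (b : Fin n) ∈ Set.range e := by
        rw [Finset.range_orderEmbOfFin t rfl]; exact hb
      obtain ⟨j, hj⟩ := this
      exact ⟨j, Finset.mem_univ j, hj⟩
    · intro a _; rfl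
  have h2 : ∏ j : Fin t.card, κ (e j) ≤ ∏ j : Fin t.card, κ' (j : ℕ) := by
    refine Finset.prod_le_prod ?_ ?_
    · intro j _; exact hpos _ (hmem j)
    · intro j _
      have hj : (j : ℕ) < n := lt_of_lt_of_le j.2 htn
      rw [hκ' j hj]
      refine hord ⟨(j : ℕ), hj⟩ (e j) ?_
      simp only [Fin.le_def]
      exact hle j
  have h3 : ∏ j : Fin t.card, κ' (j : ℕ) = ∏ j ∈ Finset.range t.card, κ' j :=
    Fin.prod_univ_eq_prod_range (fun j => κ' j) t.card
  calc ∏ i ∈ t, κ i = ∏ j : Fin t.card, κ (e j) := h1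
    _ ≤ ∏ j : Fin t.card, κ' (j : ℕ) := h2
    _ = ∏ j ∈ Finset.range t.card, κ' j := h3

/-- Case 1 lower bound: for semi-convex κ ∈ Γ_k ordered decreasingly with
    κ_i ≥ δ_i κ_1 (1 ≤ i ≤ k) and κ_k large compared to K, one has
    σ_k(κ) ≥ c κ_1^k for some c > 0, and more precisely
    σ_k(κ) ≥ κ_1⋯κ_k − C(n,k) K κ_1⋯κ_{k-1} with C(n,k) = C(n,k choose) − 1. -/
theorem stmt7 {n k : ℕ} (hk : 1 ≤ k) (hkn : k ≤ n) (κ : Fin n → ℝ)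
    (hord : ∀ i j : Fin n, i ≤ j → κ j ≤ κ i)
    (hΓ : ∀ j, 1 ≤ j → j ≤ k → 0 < esymm n j κ)
    (K : ℝ) (hK : 0 ≤ K) (hsemi : ∀ i : Fin n, -K ≤ κ i)
    (δ : ℕ → ℝ) (hδ : ∀ i, 1 ≤ i → i ≤ k → 0 < δ i)
    (hlow : ∀ i, ∀ hi : 1 ≤ i, ∀ hik : i ≤ k,
      δ i * κ ⟨0, by omega⟩ ≤ κ ⟨i - 1, by omega⟩)
    (hkK : 2 * ((n.choose k : ℝ) - 1) * K ≤ κ ⟨k - 1, by omega⟩) :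
    (∃ c : ℝ, 0 < c ∧ c * κ ⟨0, by omega⟩ ^ k ≤ esymm n k κ) ∧
      (∏ i ∈ Finset.univ.filter (fun i : Fin n => (i : ℕ) < k), κ i)
          - ((n.choose k : ℝ) - 1) * K *
            (∏ i ∈ Finset.univ.filter (fun i : Fin n => (i : ℕ) < k - 1), κ i)
        ≤ esymm n k κ := by
  classical
  set κ' : ℕ → ℝ := fun j => if h : j < n then κ ⟨j, h⟩ else 0 with hκ'def
  have hκ' : ∀ j, ∀ h : j < n, κ' j = κ ⟨j, h⟩ := by
    intro j h; simp [hκ'def, h]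
  have hCpos : 1 ≤ n.choose k := Nat.choose_pos hkn
  have hC1 : (1 : ℝ) ≤ (n.choose k : ℝ) := by exact_mod_cast hCpos
  have hCK0 : 0 ≤ ((n.choose k : ℝ) - 1) * K := mul_nonneg (by linarith) hK
  have hκk1 : 0 ≤ κ ⟨k - 1, by omega⟩ := le_trans (by nlinarith) hkK
  -- all entries with index < k are nonnegative
  have hnonneg : ∀ j, j < k → 0 ≤ κ' j := by
    intro j hj
    rw [hκ' j (by omega)]
    refine le_trans hκk1 (hord ⟨j, by omega⟩ ⟨k - 1, by omega⟩ ?_)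
    simp only [Fin.le_def]; omega
  -- κ₁ > 0
  have hκ1pos : 0 < κ ⟨0, by omega⟩ := by
    have h1 := hΓ 1 le_rfl hk
    have he1 : esymm n 1 κ = ∑ i : Fin n, κ i := by
      unfold esymm
      rw [Finset.powersetCard_one, Finset.sum_map]
      simp
    by_contra hle
    push_neg at hle
    have hall : ∀ i : Fin n, κ i ≤ 0 := fun i =>
      le_trans (hord ⟨0, by omega⟩ i (by simp [Fin.le_def])) hle
    have : ∑ i : Fin n, κ i ≤ 0 := Finset.sum_nonpos fun i _ => hall i
    rw [he1] at h1; linarith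
  -- lower bounds via δ
  have hκj : ∀ j, j < k → δ (j + 1) * κ ⟨0, by omega⟩ ≤ κ' j := by
    intro j hj
    rw [hκ' j (by omega)]
    exact hlow (j + 1) (by omega) (by omega)
  -- the set of the first k indices
  set T : Finset (Fin n) := Finset.univ.filter (fun i : Fin n => (i : ℕ) < k) with hT
  have hTcard : T.card = k := aux_card_range hkn
  have hTmem : T ∈ Finset.powersetCard k (Finset.univ : Finset (Fin n)) := by
    rw [Finset.mem_powersetCard]
    exact ⟨Finset.subset_univ _, hTcard⟩
  have hPk : ∏ i ∈ T, κ i = ∏ j ∈ Finset.range k, κ' j :=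
    aux_prod_range κ κ' hκ' k hkn
  have hPk1 : (∏ i ∈ Finset.univ.filter (fun i : Fin n => (i : ℕ) < k - 1), κ i)
      = ∏ j ∈ Finset.range (k - 1), κ' j :=
    aux_prod_range κ κ' hκ' (k - 1) (by omega)
  have hPk1nonneg : 0 ≤ ∏ j ∈ Finset.range (k - 1), κ' j :=
    Finset.prod_nonneg fun j hj => hnonneg j (by have := Finset.mem_range.mp hj; omega)
  -- key per-term lower bound
  have hterm : ∀ s ∈ (Finset.powersetCard k (Finset.univ : Finset (Fin n))).erase T,
      -(K * ∏ j ∈ Finset.range (k - 1), κ' j) ≤ ∏ i ∈ s, κ i := by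
    intro s hs
    have hsne : s ≠ T := (Finset.mem_erase.mp hs).1
    have hs' := (Finset.mem_erase.mp hs).2
    rw [Finset.mem_powersetCard] at hs'
    have hscard : s.card = k := hs'.2
    -- n.choose k ≥ 2
    have hchoose2 : 2 ≤ n.choose k := by
      have hcard : (Finset.powersetCard k (Finset.univ : Finset (Fin n))).card = n.choose k := by
        rw [Finset.card_powersetCard]
        simp
      rw [← hcard]
      exact Finset.one_lt_card.mpr ⟨T, hTmem, s, (Finset.mem_erase.mp hs).2, (Ne.symm hsne)⟩
    have hC2 : (2 : ℝ) ≤ (n.choose k : ℝ) := by exact_mod_cast hchoose2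
    -- entries with index < k are ≥ K
    have hKle : ∀ j, j < k → K ≤ κ' j := by
      intro j hj
      rw [hκ' j (by omega)]
      refine le_trans ?_ (le_trans hkK
        (hord ⟨j, by omega⟩ ⟨k - 1, by omega⟩ (by simp only [Fin.le_def]; omega)))
      nlinarith
    by_cases h0 : 0 ≤ ∏ i ∈ s, κ i
    · refine le_trans ?_ h0
      simp only [neg_nonpos]
      exact mul_nonneg hK hPk1nonneg
    push_neg at h0
    set sneg := s.filter (fun i => κ i < 0) with hsneg
    set spos := s.filter (fun i => ¬ κ i < 0) with hspos
    have hsplit : (∏ i ∈ sneg, κ i) * ∏ i ∈ spos, κ i = ∏ i ∈ s, κ i :=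
      Finset.prod_filter_mul_prod_filter_not s _ κ
    have hcards : sneg.card + spos.card = k := by
      rw [hsneg, hspos, Finset.card_filter_add_card_filter_not, hscard]
    have hposnn : ∀ i ∈ spos, 0 ≤ κ i := by
      intro i hi
      have := (Finset.mem_filter.mp hi).2
      linarith [not_lt.mp this]
    have hposprod : 0 ≤ ∏ i ∈ spos, κ i := Finset.prod_nonneg hposnn
    set m := sneg.card with hm
    have hm1 : 1 ≤ m := by
      by_contra hm0
      have : sneg = ∅ := Finset.card_eq_zero.mp (by omega)
      rw [this] at hsplit
      simp at hsplit
      rw [← hsplit] at h0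
      linarith
    have hmk : m ≤ k := by omega
    -- every negative-entry product has absolute value ≤ K^m
    have hnegabs : |∏ i ∈ sneg, κ i| ≤ K ^ m := by
      rw [Finset.abs_prod]
      calc ∏ i ∈ sneg, |κ i| ≤ ∏ i ∈ sneg, K := by
            refine Finset.prod_le_prod (fun i _ => abs_nonneg _) ?_
            intro i hi
            have hin := (Finset.mem_filter.mp hi).2
            rw [abs_of_neg hin]
            linarith [hsemi i]
        _ = K ^ m := by rw [Finset.prod_const]
    have hneglb : -(K ^ m) ≤ ∏ i ∈ sneg, κ i := neg_le_of_abs_le hnegabs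
    -- product over spos is at most product of the top (k - m) entries
    have hposle : ∏ i ∈ spos, κ i ≤ ∏ j ∈ Finset.range (k - m), κ' j := by
      have hcard' : spos.card = k - m := by omega
      have := aux_rearrange κ κ' hκ' hord spos hposnn
      rwa [hcard'] at this
    -- K^(m-1) * (top k-m entries) ≤ top (k-1) entries
    have hmid : K ^ (m - 1) * ∏ j ∈ Finset.range (k - m), κ' j
        ≤ ∏ j ∈ Finset.range (k - 1), κ' j := by
      have hsplit2 : ∏ j ∈ Finset.range (k - 1), κ' j
          = (∏ j ∈ Finset.range (k - m), κ' j) * ∏ j ∈ Finset.Ico (k - m) (k - 1), κ' j := by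
        rw [← Finset.prod_range_mul_prod_Ico (fun j => κ' j) (show k - m ≤ k - 1 by omega)]
      have hIco : K ^ (m - 1) ≤ ∏ j ∈ Finset.Ico (k - m) (k - 1), κ' j := by
        calc K ^ (m - 1) = ∏ j ∈ Finset.Ico (k - m) (k - 1), K := by
              rw [Finset.prod_const, Nat.card_Ico]
              congr 1
              omega
          _ ≤ ∏ j ∈ Finset.Ico (k - m) (k - 1), κ' j := by
              refine Finset.prod_le_prod (fun j _ => hK) ?_
              intro j hj
              have := Finset.mem_Ico.mp hj
              exact hKle j (by omega)
      have h1 : 0 ≤ ∏ j ∈ Finset.range (k - m), κ' j :=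
        Finset.prod_nonneg fun j hj => hnonneg j (by have := Finset.mem_range.mp hj; omega)
      calc K ^ (m - 1) * ∏ j ∈ Finset.range (k - m), κ' j
          ≤ (∏ j ∈ Finset.Ico (k - m) (k - 1), κ' j) * ∏ j ∈ Finset.range (k - m), κ' j :=
            mul_le_mul_of_nonneg_right hIco h1
        _ = ∏ j ∈ Finset.range (k - 1), κ' j := by rw [hsplit2, mul_comm]
    -- assemble
    have hKm : K ^ m = K * K ^ (m - 1) := by
      conv_lhs => rw [show m = 1 + (m - 1) by omega]
      rw [pow_add, pow_one]
    have hfin : K ^ m * ∏ i ∈ spos, κ i ≤ K * ∏ j ∈ Finset.range (k - 1), κ' j := by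
      have h1 : K ^ m * ∏ i ∈ spos, κ i ≤ K ^ m * ∏ j ∈ Finset.range (k - m), κ' j :=
        mul_le_mul_of_nonneg_left hposle (pow_nonneg hK m)
      calc K ^ m * ∏ i ∈ spos, κ i ≤ K ^ m * ∏ j ∈ Finset.range (k - m), κ' j := h1
        _ = K * (K ^ (m - 1) * ∏ j ∈ Finset.range (k - m), κ' j) := by rw [hKm]; ring
        _ ≤ K * ∏ j ∈ Finset.range (k - 1), κ' j := mul_le_mul_of_nonneg_left hmid hK
    calc -(K * ∏ j ∈ Finset.range (k - 1), κ' j)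
        ≤ -(K ^ m * ∏ i ∈ spos, κ i) := by linarith
      _ = (-(K ^ m)) * ∏ i ∈ spos, κ i := by ring
      _ ≤ (∏ i ∈ sneg, κ i) * ∏ i ∈ spos, κ i := mul_le_mul_of_nonneg_right hneglb hposprod
      _ = ∏ i ∈ s, κ i := hsplit
  -- sum over the remaining sets
  have hrest : ((n.choose k : ℝ) - 1) * (-(K * ∏ j ∈ Finset.range (k - 1), κ' j))
      ≤ ∑ s ∈ (Finset.powersetCard k (Finset.univ : Finset (Fin n))).erase T,
          ∏ i ∈ s, κ i := by
    have hcard : ((Finset.powersetCard k (Finset.univ : Finset (Fin n))).erase T).card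
        = n.choose k - 1 := by
      rw [Finset.card_erase_of_mem hTmem, Finset.card_powersetCard]
      simp
    have := Finset.card_nsmul_le_sum
      ((Finset.powersetCard k (Finset.univ : Finset (Fin n))).erase T)
      (fun s => ∏ i ∈ s, κ i) (-(K * ∏ j ∈ Finset.range (k - 1), κ' j)) hterm
    rw [hcard, nsmul_eq_mul] at this
    refine le_trans (le_of_eq ?_) this
    rw [Nat.cast_sub hCpos]
    push_cast
    ring
  have hsum : esymm n k κ = ∏ i ∈ T, κ i
      + ∑ s ∈ (Finset.powersetCard k (Finset.univ : Finset (Fin n))).erase T,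
          ∏ i ∈ s, κ i := by
    unfold esymm
    exact (Finset.add_sum_erase _ _ hTmem).symm
  have hmain : (∏ j ∈ Finset.range k, κ' j)
      - ((n.choose k : ℝ) - 1) * K * ∏ j ∈ Finset.range (k - 1), κ' j ≤ esymm n k κ := by
    rw [hsum, ← hPk]
    have := hrest
    nlinarith [hrest]
  constructor
  · -- first part
    refine ⟨(∏ j ∈ Finset.range k, δ (j + 1)) / 2, ?_, ?_⟩
    · have : 0 < ∏ j ∈ Finset.range k, δ (j + 1) :=
        Finset.prod_pos fun j hj => hδ (j + 1) (by omega)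
          (by have := Finset.mem_range.mp hj; omega)
      linarith
    · have hPksplit : ∏ j ∈ Finset.range k, κ' j
          = (∏ j ∈ Finset.range (k - 1), κ' j) * κ' (k - 1) := by
        conv_lhs => rw [show k = (k - 1) + 1 by omega]
        rw [Finset.prod_range_succ]
      have hκk' : κ' (k - 1) = κ ⟨k - 1, by omega⟩ := hκ' (k - 1) (by omega)
      have hhalf : ((n.choose k : ℝ) - 1) * K ≤ κ' (k - 1) / 2 := by
        rw [hκk']; linarith
      have hstep1 : (∏ j ∈ Finset.range k, κ' j) / 2
          ≤ (∏ j ∈ Finset.range k, κ' j)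
            - ((n.choose k : ℝ) - 1) * K * ∏ j ∈ Finset.range (k - 1), κ' j := by
        rw [hPksplit]
        have : ((n.choose k : ℝ) - 1) * K * ∏ j ∈ Finset.range (k - 1), κ' j
            ≤ (κ' (k - 1) / 2) * ∏ j ∈ Finset.range (k - 1), κ' j := by
          exact mul_le_mul_of_nonneg_right hhalf hPk1nonneg
        nlinarith
      have hstep2 : (∏ j ∈ Finset.range k, δ (j + 1)) / 2 * κ ⟨0, by omega⟩ ^ k
          ≤ (∏ j ∈ Finset.range k, κ' j) / 2 := by
        have h1 : ∏ j ∈ Finset.range k, (δ (j + 1) * κ ⟨0, by omega⟩)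
            ≤ ∏ j ∈ Finset.range k, κ' j := by
          refine Finset.prod_le_prod ?_ ?_
          · intro j hj
            have hjk := Finset.mem_range.mp hj
            exact le_of_lt (mul_pos (hδ (j + 1) (by omega) (by omega)) hκ1pos)
          · intro j hj
            exact hκj j (Finset.mem_range.mp hj)
        rw [Finset.prod_mul_distrib, Finset.prod_const, Finset.card_range] at h1
        linarith
      calc (∏ j ∈ Finset.range k, δ (j + 1)) / 2 * κ ⟨0, by omega⟩ ^ k
          ≤ (∏ j ∈ Finset.range k, κ' j) / 2 := hstep2
        _ ≤ (∏ j ∈ Finset.range k, κ' j)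
            - ((n.choose k : ℝ) - 1) * K * ∏ j ∈ Finset.range (k - 1), κ' j := hstep1
        _ ≤ esymm n k κ := hmain
  · rw [hPk, hPk1]
    exact hmain
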